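/- For F(v) = (8/(3π)) v ₂F₁(1/2,1/2;5/2;v²), the function v ↦ F(v)/(3v) satisfies F(v)/(3v) ≤ 1/3 for all v ∈ [−1/3, 0). -/
import Mathlib


open Real

/-- The Gaussian hypergeometric function `₂F₁(a,b;c;z)` as a power series. -/
noncomputable def hyp2F1 (a b c z : ℝ) : ℝ :=
  ∑' j : ℕ, ((ascPochhammer ℝ j).eval a * (ascPochhammer ℝ j).eval b
    / ((ascPochhammer ℝ j).eval c * (Nat.factorial j))) * z ^ j

/-- `F(v) = (8/(3π)) v ₂F₁(1/2,1/2;5/2;v²)`. -/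
noncomputable def Fqmc (v : ℝ) : ℝ :=
  (8 / (3 * Real.pi)) * v * hyp2F1 (1 / 2) (1 / 2) (5 / 2) (v ^ 2)

lemma poch_half_le_factorial (j : ℕ) :
    (ascPochhammer ℝ j).eval (1/2) ≤ (j.factorial : ℝ) := by
  induction j with
  | zero => simp
  | succ n ih =>
    rw [ascPochhammer_succ_eval]
    have h1 : (0:ℝ) ≤ (ascPochhammer ℝ n).eval (1/2) :=
      le_of_lt (ascPochhammer_pos n _ (by norm_num))
    have h2 : (1/2 : ℝ) + n ≤ n + 1 := by linarith
    calc (ascPochhammer ℝ n).eval (1/2) * (1/2 + n)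
        ≤ (n.factorial : ℝ) * (n + 1) :=
          mul_le_mul ih h2 (by positivity) (by positivity)
      _ = ((n+1).factorial : ℝ) := by rw [Nat.factorial_succ]; push_cast; ring

lemma poch_half_le_poch_fivehalf (j : ℕ) :
    (ascPochhammer ℝ j).eval (1/2) ≤ (ascPochhammer ℝ j).eval (5/2) := by
  induction j with
  | zero => simp
  | succ n ih =>
    rw [ascPochhammer_succ_eval, ascPochhammer_succ_eval]
    have h1 : (0:ℝ) ≤ (ascPochhammer ℝ n).eval (1/2) :=
      le_of_lt (ascPochhammer_pos n _ (by norm_num))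
    have h2 : (1/2 : ℝ) + n ≤ 5/2 + n := by norm_num
    exact mul_le_mul ih h2 (by positivity) (le_of_lt (ascPochhammer_pos n _ (by norm_num)))

lemma hyp_le (x : ℝ) (hx0 : 0 ≤ x) (hx : x ≤ 1/9) :
    hyp2F1 (1/2) (1/2) (5/2) x ≤ 9/8 := by
  have hxlt : x < 1 := lt_of_le_of_lt hx (by norm_num)
  set f : ℕ → ℝ := fun j => ((ascPochhammer ℝ j).eval (1/2) * (ascPochhammer ℝ j).eval (1/2)
    / ((ascPochhammer ℝ j).eval (5/2) * (Nat.factorial j))) * x ^ j with hf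
  have hfnonneg : ∀ j, 0 ≤ f j := by
    intro j
    have h1 : (0:ℝ) ≤ (ascPochhammer ℝ j).eval (1/2) :=
      le_of_lt (ascPochhammer_pos j _ (by norm_num))
    have h2 : (0:ℝ) < (ascPochhammer ℝ j).eval (5/2) := ascPochhammer_pos j _ (by norm_num)
    have h3 : (0:ℝ) < (j.factorial : ℝ) := by exact_mod_cast j.factorial_pos
    positivity
  have hfle : ∀ j, f j ≤ x ^ j := by
    intro j
    have h2 : (0:ℝ) < (ascPochhammer ℝ j).eval (5/2) := ascPochhammer_pos j _ (by norm_num)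
    have h3 : (0:ℝ) < (j.factorial : ℝ) := by exact_mod_cast j.factorial_pos
    have h1 : (0:ℝ) ≤ (ascPochhammer ℝ j).eval (1/2) :=
      le_of_lt (ascPochhammer_pos j _ (by norm_num))
    have hcoeff : (ascPochhammer ℝ j).eval (1/2) * (ascPochhammer ℝ j).eval (1/2)
        / ((ascPochhammer ℝ j).eval (5/2) * (Nat.factorial j)) ≤ 1 := by
      rw [div_le_one (by positivity)]
      exact mul_le_mul (poch_half_le_poch_fivehalf j) (poch_half_le_factorial j) h1 h2.le
    calc f j ≤ 1 * x ^ j := mul_le_mul_of_nonneg_right hcoeff (by positivity)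
      _ = x ^ j := one_mul _
  have hgsum : Summable (fun j : ℕ => x ^ j) :=
    summable_geometric_of_lt_one hx0 hxlt
  have hfsum : Summable f := Summable.of_nonneg_of_le hfnonneg hfle hgsum
  have : hyp2F1 (1/2) (1/2) (5/2) x ≤ ∑' j : ℕ, x ^ j := by
    unfold hyp2F1
    exact Summable.tsum_le_tsum hfle hfsum hgsum
  rw [tsum_geometric_of_lt_one hx0 hxlt] at this
  refine this.trans ?_
  rw [inv_le_comm₀ (by linarith) (by norm_num)]
  linarith

theorem F_div_three_v_le (v : ℝ) (hv : v ∈ Set.Ico (-(1 : ℝ) / 3) 0) :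
    Fqmc v / (3 * v) ≤ 1 / 3 := by
  obtain ⟨hv1, hv2⟩ := hv
  have hvne : v ≠ 0 := ne_of_lt hv2
  have hx0 : 0 ≤ v ^ 2 := sq_nonneg v
  have hx : v ^ 2 ≤ 1/9 := by nlinarith
  have hS := hyp_le (v ^ 2) hx0 hx
  have hpi : (3:ℝ) < Real.pi := Real.pi_gt_three
  have hpi0 : (0:ℝ) < Real.pi := Real.pi_pos
  have heq : Fqmc v / (3 * v) = (8 / (9 * Real.pi)) * hyp2F1 (1/2) (1/2) (5/2) (v ^ 2) := by
    unfold Fqmc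
    field_simp
    ring
  rw [heq]
  have h98 : (8 / (9 * Real.pi)) * hyp2F1 (1/2) (1/2) (5/2) (v ^ 2)
      ≤ (8 / (9 * Real.pi)) * (9/8) := by
    apply mul_le_mul_of_nonneg_left hS (by positivity)
  refine h98.trans ?_
  rw [div_mul_eq_mul_div, div_le_div_iff₀ (by positivity) (by norm_num)]
  nlinarith
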